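/- arXiv:2503.03089 — 3 statements merged into one kernel-verified Lean document; each statement's English description precedes it below -/
import Mathlib

section
/- Suppose A(x,t) satisfies ξᵀAξ ≥ c₀|ξ|² with c₀ > 0, K satisfies ξᵀKξ ≥ −c₁|ξ|² with c₁ ≥ 0, P' ≥ 0, and F ∈ C²(J) satisfies F' > 0 and F'' = λ P' F' with λ ≥ c₁/c₀. If u is a C^{2,1} function with values in J and Lu ≤ 0 on U_T, then w = F(u) satisfies 𝓛w ≤ 0 on U_T, where Lu = ∂_t u − ⟨A,D²u⟩ + uB·∇u + P'(u)(K∇u)·∇u and 𝓛w = ∂_t w − ⟨A,D²w⟩ + uB·∇w. -/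
noncomputable def pgrad {n : ℕ} (f : (Fin n → ℝ) → ℝ) (x : Fin n → ℝ) (i : Fin n) : ℝ :=
  fderiv ℝ f x (Pi.single i 1)

noncomputable def phess {n : ℕ} (f : (Fin n → ℝ) → ℝ) (x : Fin n → ℝ) (i j : Fin n) : ℝ :=
  fderiv ℝ (fun y => fderiv ℝ f y (Pi.single j 1)) x (Pi.single i 1)

/-- If `A` is uniformly elliptic with constant `c₀`, `K` satisfies `ξᵀKξ ≥ −c₁|ξ|²`,
`P' ≥ 0`, `F' > 0`, `F'' = λ P' F'` with `λ ≥ c₁/c₀`, and `Lu ≤ 0` on `U_T`,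
then `w = F(u)` satisfies `𝓛w ≤ 0` on `U_T`. -/
theorem stmt_6 {n : ℕ} (U : Set (Fin n → ℝ)) (hU : IsOpen U) (T : ℝ) (hT : 0 < T)
    (A K : (Fin n → ℝ) → ℝ → Matrix (Fin n) (Fin n) ℝ)
    (B : (Fin n → ℝ) → ℝ → Fin n → ℝ)
    (hAsym : ∀ x ∈ U, ∀ t ∈ Set.Ioc 0 T, (A x t).IsSymm)
    (c₀ c₁ : ℝ) (hc₀ : 0 < c₀) (hc₁ : 0 ≤ c₁)
    (hell : ∀ x ∈ U, ∀ t ∈ Set.Ioc 0 T, ∀ ξ : Fin n → ℝ,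
      c₀ * ∑ i, ξ i ^ 2 ≤ ∑ i, ∑ j, ξ i * A x t i j * ξ j)
    (hK : ∀ x ∈ U, ∀ t ∈ Set.Ioc 0 T, ∀ ξ : Fin n → ℝ,
      -c₁ * ∑ i, ξ i ^ 2 ≤ ∑ i, ∑ j, ξ i * K x t i j * ξ j)
    (J : Set ℝ) (P' : ℝ → ℝ) (hP'0 : ∀ s ∈ J, 0 ≤ P' s)
    (lam : ℝ) (hlam : c₁ / c₀ ≤ lam)
    (F F' F'' : ℝ → ℝ)
    (hF' : ∀ s ∈ J, HasDerivAt F (F' s) s)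
    (hF'' : ∀ s ∈ J, HasDerivAt F' (F'' s) s)
    (hF'pos : ∀ s ∈ J, 0 < F' s)
    (hODE : ∀ s ∈ J, F'' s = lam * P' s * F' s)
    (u : (Fin n → ℝ) → ℝ → ℝ)
    (hrange : ∀ x ∈ U, ∀ t ∈ Set.Ioc 0 T, u x t ∈ J)
    (hux : ∀ x ∈ U, ∀ t ∈ Set.Ioc 0 T, ContDiffAt ℝ 2 (fun y => u y t) x)
    (hut : ∀ x ∈ U, ∀ t ∈ Set.Ioc 0 T, DifferentiableAt ℝ (u x) t)
    (hLu : ∀ x ∈ U, ∀ t ∈ Set.Ioc 0 T,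
      deriv (fun τ => u x τ) t
        - (∑ i, ∑ j, A x t i j * phess (fun y => u y t) x i j)
        + u x t * ∑ i, B x t i * pgrad (fun y => u y t) x i
        + P' (u x t) *
            ∑ i, ∑ j, pgrad (fun y => u y t) x i * K x t i j * pgrad (fun y => u y t) x j
      ≤ 0) :
    ∀ x ∈ U, ∀ t ∈ Set.Ioc 0 T,
      deriv (fun τ => F (u x τ)) t
        - (∑ i, ∑ j, A x t i j * phess (fun y => F (u y t)) x i j)
        + u x t * ∑ i, B x t i * pgrad (fun y => F (u y t)) x i
      ≤ 0 := by
  intro x hx t ht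
  have hsJ : u x t ∈ J := hrange x hx t ht
  -- differentiability of the spatial slice
  have hfd : ∀ y ∈ U, HasFDerivAt (fun z => u z t) (fderiv ℝ (fun z => u z t) y) y :=
    fun y hy => (((hux y hy t ht).differentiableAt (by norm_num)).hasFDerivAt)
  -- gradient of F ∘ u
  have hgradF : ∀ y ∈ U, HasFDerivAt (fun z => F (u z t))
      ((F' (u y t)) • fderiv ℝ (fun z => u z t) y) y := by
    intro y hy
    exact (hF' _ (hrange y hy t ht)).comp_hasFDerivAt y (hfd y hy)
  -- time derivative
  have htder : deriv (fun τ => F (u x τ)) t = F' (u x t) * deriv (fun τ => u x τ) t := by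
    have h1 : HasDerivAt (fun τ => u x τ) (deriv (fun τ => u x τ) t) t :=
      (hut x hx t ht).hasDerivAt
    have h2 : HasDerivAt (fun τ => F (u x τ))
        (F' (u x t) * deriv (fun τ => u x τ) t) t := (hF' _ hsJ).comp t h1
    exact h2.deriv
  -- gradient identity
  have hpg : ∀ i, pgrad (fun y => F (u y t)) x i
      = F' (u x t) * pgrad (fun y => u y t) x i := by
    intro i
    rw [pgrad, (hgradF x hx).fderiv]
    simp [pgrad]
  -- differentiability of y ↦ fderiv (u · t) y (e j)
  have hDj : ∀ j : Fin n, HasFDerivAt (fun y => fderiv ℝ (fun z => u z t) y (Pi.single j 1))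
      (fderiv ℝ (fun y => fderiv ℝ (fun z => u z t) y (Pi.single j 1)) x) x := by
    intro j
    have h1 : ContDiffAt ℝ 1 (fderiv ℝ (fun z => u z t)) x :=
      (hux x hx t ht).fderiv_right (by norm_num)
    have h2 : DifferentiableAt ℝ (fderiv ℝ (fun z => u z t)) x :=
      h1.differentiableAt (by norm_num)
    exact (h2.clm_apply (differentiableAt_const (Pi.single j 1))).hasFDerivAt
  -- hessian identity
  have hph : ∀ i j, phess (fun y => F (u y t)) x i j
      = F' (u x t) * phess (fun y => u y t) x i j
        + F'' (u x t) * (pgrad (fun y => u y t) x j * pgrad (fun y => u y t) x i) := by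
    intro i j
    have hev : (fun y => fderiv ℝ (fun z => F (u z t)) y (Pi.single j 1))
        =ᶠ[nhds x] (fun y => F' (u y t) * fderiv ℝ (fun z => u z t) y (Pi.single j 1)) := by
      filter_upwards [hU.eventually_mem hx] with y hy
      rw [(hgradF y hy).fderiv]
      simp
    have ha : HasFDerivAt (fun y => F' (u y t))
        ((F'' (u x t)) • fderiv ℝ (fun z => u z t) x) x := by
      have := (hF'' _ hsJ).comp_hasFDerivAt x (hfd x hx)
      exact this
    have hprod : HasFDerivAt (fun y => F' (u y t) * fderiv ℝ (fun z => u z t) y (Pi.single j 1))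
        (F' (u x t) • (fderiv ℝ (fun y => fderiv ℝ (fun z => u z t) y (Pi.single j 1)) x)
          + (fderiv ℝ (fun z => u z t) x (Pi.single j 1)) •
              ((F'' (u x t)) • fderiv ℝ (fun z => u z t) x)) x :=
      HasFDerivAt.mul ha (hDj j)
    rw [phess, hev.fderiv_eq, hprod.fderiv]
    simp [phess, pgrad]
    ring
  -- abbreviations
  set g : Fin n → ℝ := fun i => pgrad (fun y => u y t) x i with hg
  set H : Fin n → Fin n → ℝ := fun i j => phess (fun y => u y t) x i j with hH
  set s := u x t
  -- rewrite the goal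
  rw [htder]
  have hsum1 : (∑ i, ∑ j, A x t i j * phess (fun y => F (u y t)) x i j)
      = F' s * (∑ i, ∑ j, A x t i j * H i j)
        + F'' s * (∑ i, ∑ j, g i * A x t i j * g j) := by
    rw [Finset.mul_sum, Finset.mul_sum, ← Finset.sum_add_distrib]
    refine Finset.sum_congr rfl fun i _ => ?_
    rw [Finset.mul_sum, Finset.mul_sum, ← Finset.sum_add_distrib]
    refine Finset.sum_congr rfl fun j _ => ?_
    rw [hph i j]
    ring
  have hsum2 : (∑ i, B x t i * pgrad (fun y => F (u y t)) x i)
      = F' s * ∑ i, B x t i * g i := by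
    rw [Finset.mul_sum]
    refine Finset.sum_congr rfl fun i _ => ?_
    rw [hpg i]; ring
  rw [hsum1, hsum2]
  -- the inequalities
  have hLu' := hLu x hx t ht
  have hQK := hK x hx t ht g
  have hQA := hell x hx t ht g
  have hP := hP'0 s hsJ
  have hF'p := hF'pos s hsJ
  have hlam0 : 0 ≤ lam := le_trans (div_nonneg hc₁ hc₀.le) hlam
  have hlc : c₁ ≤ lam * c₀ := (div_le_iff₀ hc₀).mp hlam
  have hS : (0:ℝ) ≤ ∑ i, g i ^ 2 := Finset.sum_nonneg fun i _ => sq_nonneg _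
  have hODEs := hODE s hsJ
  set dt := deriv (fun τ => u x τ) t
  set SA := ∑ i, ∑ j, A x t i j * H i j
  set QA := ∑ i, ∑ j, g i * A x t i j * g j
  set QK := ∑ i, ∑ j, g i * K x t i j * g j
  set uBg := ∑ i, B x t i * g i
  set S := ∑ i, g i ^ 2
  -- hLu' : dt - SA + u x t * uBg + P' s * QK ≤ 0
  have h1 : dt - SA + u x t * uBg ≤ P' s * (c₁ * S) := by
    nlinarith [mul_le_mul_of_nonneg_left hQK hP]
  have h2 : F' s * (dt - SA + u x t * uBg) ≤ F' s * (P' s * (c₁ * S)) :=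
    mul_le_mul_of_nonneg_left h1 hF'p.le
  have h3 : F'' s * (c₀ * S) ≤ F'' s * QA := by
    have hF''nn : 0 ≤ F'' s := by rw [hODEs]; positivity
    exact mul_le_mul_of_nonneg_left hQA hF''nn
  have goal_eq : F' s * dt - (F' s * SA + F'' s * QA) + u x t * (F' s * uBg)
      = F' s * (dt - SA + u x t * uBg) - F'' s * QA := by ring
  rw [goal_eq]
  rw [hODEs] at h3 ⊢
  nlinarith [mul_nonneg (mul_nonneg hF'p.le hP) hS]
end

section
/- Suppose A(x,t) satisfies ξᵀAξ ≥ c₀|ξ|² with c₀ > 0, K satisfies ξᵀKξ ≤ c₂|ξ|² with c₂ ≥ 0, P' ≥ 0, and F(s) = ∫_{s₀}^s e^{λP(z)}dz with λ ≤ −c₂/c₀. If u is a C^{2,1} function with values in J and Lu ≥ 0 on U_T, then w = F(u) satisfies 𝓛w ≥ 0 on U_T. -/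
/-- If `A` is uniformly elliptic with constant `c₀`, `K` satisfies `ξᵀKξ ≤ c₂|ξ|²`,
`P' ≥ 0`, `F' > 0`, `F'' = λ P' F'` with `λ ≤ −c₂/c₀`, and `Lu ≥ 0` on `U_T`,
then `w = F(u)` satisfies `𝓛w ≥ 0` on `U_T`. -/
theorem stmt_7 {n : ℕ} (U : Set (Fin n → ℝ)) (hU : IsOpen U) (T : ℝ) (hT : 0 < T)
    (A K : (Fin n → ℝ) → ℝ → Matrix (Fin n) (Fin n) ℝ)
    (B : (Fin n → ℝ) → ℝ → Fin n → ℝ)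
    (hAsym : ∀ x ∈ U, ∀ t ∈ Set.Ioc 0 T, (A x t).IsSymm)
    (c₀ c₂ : ℝ) (hc₀ : 0 < c₀) (hc₂ : 0 ≤ c₂)
    (hell : ∀ x ∈ U, ∀ t ∈ Set.Ioc 0 T, ∀ ξ : Fin n → ℝ,
      c₀ * ∑ i, ξ i ^ 2 ≤ ∑ i, ∑ j, ξ i * A x t i j * ξ j)
    (hK : ∀ x ∈ U, ∀ t ∈ Set.Ioc 0 T, ∀ ξ : Fin n → ℝ,
      ∑ i, ∑ j, ξ i * K x t i j * ξ j ≤ c₂ * ∑ i, ξ i ^ 2)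
    (J : Set ℝ) (P' : ℝ → ℝ) (hP'0 : ∀ s ∈ J, 0 ≤ P' s)
    (lam : ℝ) (hlam : lam ≤ -c₂ / c₀)
    (F F' F'' : ℝ → ℝ)
    (hF' : ∀ s ∈ J, HasDerivAt F (F' s) s)
    (hF'' : ∀ s ∈ J, HasDerivAt F' (F'' s) s)
    (hF'pos : ∀ s ∈ J, 0 < F' s)
    (hODE : ∀ s ∈ J, F'' s = lam * P' s * F' s)
    (u : (Fin n → ℝ) → ℝ → ℝ)
    (hrange : ∀ x ∈ U, ∀ t ∈ Set.Ioc 0 T, u x t ∈ J)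
    (hux : ∀ x ∈ U, ∀ t ∈ Set.Ioc 0 T, ContDiffAt ℝ 2 (fun y => u y t) x)
    (hut : ∀ x ∈ U, ∀ t ∈ Set.Ioc 0 T, DifferentiableAt ℝ (u x) t)
    (hLu : ∀ x ∈ U, ∀ t ∈ Set.Ioc 0 T,
      deriv (fun τ => u x τ) t
        - (∑ i, ∑ j, A x t i j * phess (fun y => u y t) x i j)
        + u x t * ∑ i, B x t i * pgrad (fun y => u y t) x i
        + P' (u x t) *
            ∑ i, ∑ j, pgrad (fun y => u y t) x i * K x t i j * pgrad (fun y => u y t) x j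
      ≥ 0) :
    ∀ x ∈ U, ∀ t ∈ Set.Ioc 0 T,
      deriv (fun τ => F (u x τ)) t
        - (∑ i, ∑ j, A x t i j * phess (fun y => F (u y t)) x i j)
        + u x t * ∑ i, B x t i * pgrad (fun y => F (u y t)) x i
      ≥ 0 := by
  intro x hx t ht
  set g : (Fin n → ℝ) → ℝ := fun y => u y t with hgdef
  have hgx : ContDiffAt ℝ 2 g x := hux x hx t ht
  have huJ : g x ∈ J := hrange x hx t ht
  set c := F' (g x) with hc
  set d := F'' (g x) with hd
  set ξ : Fin n → ℝ := fun i => pgrad g x i with hξ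
  set H : Fin n → Fin n → ℝ := fun i j => phess g x i j with hH
  -- eventual facts near x
  have hev : ∀ᶠ y in nhds x, y ∈ U ∧ ContDiffAt ℝ 2 g y := by
    filter_upwards [hU.mem_nhds hx, hgx.eventually (by norm_num)] with y h1 h2
    exact ⟨h1, h2⟩
  -- fderiv of composition on U
  have key : ∀ y, y ∈ U → ContDiffAt ℝ 2 g y →
      fderiv ℝ (fun z => F (g z)) y = F' (g y) • fderiv ℝ g y := by
    intro y hy hcy
    exact ((hF' (g y) (hrange y hy t ht)).comp_hasFDerivAt y
      (hcy.differentiableAt two_ne_zero).hasFDerivAt).fderiv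
  -- gradient chain rule at x
  have hgrad : ∀ i, pgrad (fun y => F (u y t)) x i = c * ξ i := by
    intro i
    show fderiv ℝ (fun z => F (g z)) x (Pi.single i 1) = _
    rw [key x hx hgx]
    simp [hξ, pgrad, hc]
  -- time derivative chain rule
  have hdt : deriv (fun τ => F (u x τ)) t = c * deriv (fun τ => u x τ) t := by
    have h1 := (hF' (u x t) huJ).comp t (hut x hx t ht).hasDerivAt
    exact h1.deriv
  -- hessian chain rule
  have hDg : DifferentiableAt ℝ g x := hgx.differentiableAt two_ne_zero
  have hDfd : DifferentiableAt ℝ (fderiv ℝ g) x :=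
    (hgx.fderiv_right (m := 1) (by norm_num)).differentiableAt one_ne_zero
  have hhess : ∀ i j, phess (fun y => F (u y t)) x i j = c * H i j + d * (ξ i * ξ j) := by
    intro i j
    have heq : (fun y => fderiv ℝ (fun z => F (g z)) y (Pi.single j 1)) =ᶠ[nhds x]
        (fun y => F' (g y) * fderiv ℝ g y (Pi.single j 1)) := by
      filter_upwards [hev] with y hy
      rw [key y hy.1 hy.2]; simp
    have h1 : DifferentiableAt ℝ (fun y => F' (g y)) x := by
      exact ((hF'' (g x) huJ).comp_hasFDerivAt x hDg.hasFDerivAt).differentiableAt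
    have h2 : DifferentiableAt ℝ (fun y => fderiv ℝ g y (Pi.single j 1)) x :=
      hDfd.clm_apply (differentiableAt_const _)
    have hfF' : fderiv ℝ (fun y => F' (g y)) x = d • fderiv ℝ g x :=
      ((hF'' (g x) huJ).comp_hasFDerivAt x hDg.hasFDerivAt).fderiv
    show fderiv ℝ (fun y => fderiv ℝ (fun z => F (g z)) y (Pi.single j 1)) x (Pi.single i 1) = _
    rw [heq.fderiv_eq, fderiv_fun_mul h1 h2, ContinuousLinearMap.add_apply,
      ContinuousLinearMap.smul_apply, ContinuousLinearMap.smul_apply, hfF',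
      ContinuousLinearMap.smul_apply]
    have : fderiv ℝ (fun y => fderiv ℝ g y (Pi.single j 1)) x (Pi.single i 1) = H i j := rfl
    rw [this]
    simp only [smul_eq_mul, hξ, pgrad, hc, hd]
    ring
  -- rewrite the sums
  have hsumA : ∑ i, ∑ j, A x t i j * phess (fun y => F (u y t)) x i j
      = c * (∑ i, ∑ j, A x t i j * H i j) + d * (∑ i, ∑ j, ξ i * A x t i j * ξ j) := by
    rw [Finset.mul_sum, Finset.mul_sum, ← Finset.sum_add_distrib]
    refine Finset.sum_congr rfl fun i _ => ?_
    rw [Finset.mul_sum, Finset.mul_sum, ← Finset.sum_add_distrib]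
    refine Finset.sum_congr rfl fun j _ => ?_
    rw [hhess i j]; ring
  have hsumB : ∑ i, B x t i * pgrad (fun y => F (u y t)) x i
      = c * ∑ i, B x t i * ξ i := by
    rw [Finset.mul_sum]
    refine Finset.sum_congr rfl fun i _ => ?_
    rw [hgrad i]; ring
  -- abbreviations
  set QA := ∑ i, ∑ j, ξ i * A x t i j * ξ j with hQA
  set QK := ∑ i, ∑ j, ξ i * K x t i j * ξ j with hQK
  set SA := ∑ i, ∑ j, A x t i j * H i j with hSA
  set SB := ∑ i, B x t i * ξ i with hSB
  have hL : deriv (fun τ => u x τ) t - SA + u x t * SB + P' (u x t) * QK ≥ 0 := hLu x hx t ht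
  have hcpos : 0 < c := hF'pos _ huJ
  have hP : 0 ≤ P' (u x t) := hP'0 _ huJ
  have hode : d = lam * P' (u x t) * c := hODE _ huJ
  have hQAge : c₀ * ∑ i, ξ i ^ 2 ≤ QA := hell x hx t ht ξ
  have hQKle : QK ≤ c₂ * ∑ i, ξ i ^ 2 := hK x hx t ht ξ
  have hlam0 : lam ≤ 0 := hlam.trans (by rw [neg_div]; exact neg_nonpos.mpr (div_nonneg hc₂ hc₀.le))
  have hlc : lam * c₀ ≤ -c₂ := by
    have := mul_le_mul_of_nonneg_right hlam hc₀.le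
    rwa [div_mul_cancel₀ _ hc₀.ne'] at this
  have hquad : QK + lam * QA ≤ 0 := by
    have h1 : lam * QA ≤ lam * (c₀ * ∑ i, ξ i ^ 2) := mul_le_mul_of_nonpos_left hQAge hlam0
    have h2 : lam * (c₀ * ∑ i, ξ i ^ 2) ≤ -c₂ * ∑ i, ξ i ^ 2 := by
      have hsq : (0:ℝ) ≤ ∑ i, ξ i ^ 2 := Finset.sum_nonneg fun i _ => sq_nonneg _
      calc lam * (c₀ * ∑ i, ξ i ^ 2) = (lam * c₀) * ∑ i, ξ i ^ 2 := by ring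
        _ ≤ -c₂ * ∑ i, ξ i ^ 2 := mul_le_mul_of_nonneg_right hlc hsq
    linarith
  -- final computation
  rw [hdt, hsumA, hsumB]
  have hexp : c * deriv (fun τ => u x τ) t - (c * SA + d * QA) + u x t * (c * SB)
      = c * (deriv (fun τ => u x τ) t - SA + u x t * SB + P' (u x t) * QK)
        - c * P' (u x t) * (QK + lam * QA) := by
    rw [hode]; ring
  rw [ge_iff_le, ← sub_nonneg]
  ring_nf
  ring_nf at hexp
  rw [hexp]
  have t1 : 0 ≤ c * (deriv (fun τ => u x τ) t - SA + u x t * SB + P' (u x t) * QK) :=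
    mul_nonneg hcpos.le hL
  have t2 : c * P' (u x t) * (QK + lam * QA) ≤ 0 :=
    mul_nonpos_of_nonneg_of_nonpos (mul_nonneg hcpos.le hP) hquad
  linarith
end

section
/- Let φ ∈ C²(U) satisfy φ ≤ c₀|∇φ|² and β ≥ ⟨A,D²φ⟩ − b·∇φ on U×(0,∞), where A satisfies ξᵀAξ ≥ c₀|ξ|². Then W(x,t) = t^{−β}e^{−φ(x)/t} satisfies L̃W ≤ 0 on U×(0,∞), where L̃W = W_t − ⟨A,D²W⟩ + b·∇W. -/
private lemma hasFDerivAt_cexp {n : ℕ} (φ : (Fin n → ℝ) → ℝ) (y : Fin n → ℝ)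
    (hφ : DifferentiableAt ℝ φ y) (c t : ℝ) :
    HasFDerivAt (fun z => c * Real.exp (-(φ z) / t))
      ((c * Real.exp (-(φ y) / t) * (-1 / t)) • fderiv ℝ φ y) y := by
  have h1 : HasFDerivAt (fun z => -1 / t * φ z) ((-1 / t) • fderiv ℝ φ y) y :=
    hφ.hasFDerivAt.const_mul _
  have h2 : (fun z => -1 / t * φ z) = fun z => -(φ z) / t := by
    funext z; ring
  rw [h2] at h1
  have h3 := (h1.exp).const_mul c
  refine h3.congr_fderiv ?_
  rw [smul_smul, smul_smul]

private lemma pgrad_cexp {n : ℕ} (φ : (Fin n → ℝ) → ℝ) (y : Fin n → ℝ)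
    (hφ : DifferentiableAt ℝ φ y) (c t : ℝ) (i : Fin n) :
    pgrad (fun z => c * Real.exp (-(φ z) / t)) y i
      = c * Real.exp (-(φ y) / t) * (-1 / t) * pgrad φ y i := by
  rw [pgrad, (hasFDerivAt_cexp φ y hφ c t).fderiv, ContinuousLinearMap.smul_apply,
    smul_eq_mul, pgrad]

private lemma hasDerivAt_time (a β t : ℝ) (ht : 0 < t) :
    HasDerivAt (fun τ : ℝ => τ ^ (-β) * Real.exp (-a / τ))
      (t ^ (-β) * Real.exp (-a / t) * (-β / t + a / t ^ 2)) t := by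
  have h1 : HasDerivAt (fun τ : ℝ => τ ^ (-β)) (-β * t ^ (-β - 1)) t :=
    Real.hasDerivAt_rpow_const (Or.inl ht.ne')
  have h2 : HasDerivAt (fun τ : ℝ => -a / τ) (a / t ^ 2) t := by
    have h := HasDerivAt.const_mul (-a) (hasDerivAt_inv ht.ne')
    have heq : (fun τ : ℝ => -a * τ⁻¹) = fun τ => -a / τ := by
      funext τ; rw [div_eq_mul_inv]
    rw [heq] at h
    refine h.congr_deriv ?_
    field_simp
  have h4 := h1.mul h2.exp
  refine h4.congr_deriv ?_
  rw [Real.rpow_sub ht, Real.rpow_one]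
  field_simp

private lemma phess_cexp {n : ℕ} (U : Set (Fin n → ℝ)) (hU : IsOpen U)
    (φ : (Fin n → ℝ) → ℝ) (hφ : ∀ y ∈ U, ContDiffAt ℝ 2 φ y)
    (x : Fin n → ℝ) (hx : x ∈ U) (c t : ℝ) (ht : t ≠ 0) (i j : Fin n) :
    phess (fun z => c * Real.exp (-(φ z) / t)) x i j
      = c * Real.exp (-(φ x) / t) *
          (pgrad φ x i * pgrad φ x j / t ^ 2 - phess φ x i j / t) := by
  have hdx : DifferentiableAt ℝ φ x := (hφ x hx).differentiableAt (by norm_num)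
  have hΦ : ContDiffAt ℝ 1 (fderiv ℝ φ) x := (hφ x hx).fderiv_right (by norm_num)
  have hΦd : DifferentiableAt ℝ (fderiv ℝ φ) x := hΦ.differentiableAt (by norm_num)
  set L : ((Fin n → ℝ) →L[ℝ] ℝ) →L[ℝ] ℝ :=
    ContinuousLinearMap.apply ℝ ℝ (Pi.single j (1:ℝ)) with hL
  have hG : HasFDerivAt (fun y => fderiv ℝ φ y (Pi.single j 1))
      (L.comp (fderiv ℝ (fderiv ℝ φ) x)) x :=
    (L.hasFDerivAt).comp x hΦd.hasFDerivAt
  have hmul : HasFDerivAt (fun y => (c * Real.exp (-(φ y) / t)) *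
      ((-1/t) * fderiv ℝ φ y (Pi.single j 1))) _ x := (hasFDerivAt_cexp φ x hdx c t).mul (hG.const_mul (-1/t))
  have hev : (fun y => fderiv ℝ (fun z => c * Real.exp (-(φ z) / t)) y (Pi.single j 1))
      =ᶠ[nhds x] (fun y => (c * Real.exp (-(φ y) / t)) *
        ((-1/t) * fderiv ℝ φ y (Pi.single j 1))) := by
    filter_upwards [hU.mem_nhds hx] with y hy
    have hd := (hφ y hy).differentiableAt (by norm_num)
    rw [(hasFDerivAt_cexp φ y hd c t).fderiv, ContinuousLinearMap.smul_apply, smul_eq_mul]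
    ring
  have hkey : phess (fun z => c * Real.exp (-(φ z) / t)) x i j
      = (fderiv ℝ (fun y => (c * Real.exp (-(φ y) / t)) *
          ((-1/t) * fderiv ℝ φ y (Pi.single j 1))) x) (Pi.single i 1) := by
    rw [phess, hev.fderiv_eq]
  rw [hkey, hmul.fderiv]
  have hphess : phess φ x i j = L ((fderiv ℝ (fderiv ℝ φ) x) (Pi.single i 1)) := by
    rw [phess, hG.fderiv]; rfl
  simp only [ContinuousLinearMap.add_apply, ContinuousLinearMap.smul_apply,
    ContinuousLinearMap.comp_apply, smul_eq_mul]
  rw [← hphess]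
  rw [pgrad, pgrad]
  field_simp
  ring

/-- If `φ ≤ c₀|∇φ|²` and `β ≥ ⟨A,D²φ⟩ − b·∇φ` on `U × (0,∞)`, with `A` uniformly
elliptic with constant `c₀`, then `W(x,t) = t^{−β} e^{−φ(x)/t}` satisfies `L̃W ≤ 0`. -/
theorem stmt_11 {n : ℕ} (U : Set (Fin n → ℝ)) (hU : IsOpen U)
    (A : (Fin n → ℝ) → ℝ → Matrix (Fin n) (Fin n) ℝ)
    (hAsym : ∀ x ∈ U, ∀ t > (0:ℝ), (A x t).IsSymm)
    (b : (Fin n → ℝ) → ℝ → Fin n → ℝ)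
    (c₀ : ℝ) (hc₀ : 0 < c₀)
    (hell : ∀ x ∈ U, ∀ t > (0:ℝ), ∀ ξ : Fin n → ℝ,
      c₀ * ∑ i, ξ i ^ 2 ≤ ∑ i, ∑ j, ξ i * A x t i j * ξ j)
    (β : ℝ) (hβ : 0 < β)
    (φ : (Fin n → ℝ) → ℝ) (hφreg : ∀ x ∈ U, ContDiffAt ℝ 2 φ x)
    (hφpos : ∀ x ∈ U, 0 < φ x)
    (hφgrad : ∀ x ∈ U, φ x ≤ c₀ * ∑ i, (pgrad φ x i) ^ 2)
    (hβbig : ∀ x ∈ U, ∀ t > (0:ℝ),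
      (∑ i, ∑ j, A x t i j * phess φ x i j) - (∑ i, b x t i * pgrad φ x i) ≤ β)
    (W : (Fin n → ℝ) → ℝ → ℝ)
    (hW : ∀ x, ∀ t > (0:ℝ), W x t = t ^ (-β) * Real.exp (-(φ x) / t)) :
    ∀ x ∈ U, ∀ t > (0:ℝ),
      deriv (fun τ => τ ^ (-β) * Real.exp (-(φ x) / τ)) t
        - (∑ i, ∑ j, A x t i j * phess (fun y => W y t) x i j)
        + ∑ i, b x t i * pgrad (fun y => W y t) x i
      ≤ 0 := by
  intro x hx t ht
  have hfun : (fun y => W y t) = fun y => t ^ (-β) * Real.exp (-(φ y) / t) :=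
    funext fun y => hW y t ht
  set c := t ^ (-β) with hc
  set E := Real.exp (-(φ x) / t) with hE
  have hcE : 0 < c * E := mul_pos (Real.rpow_pos_of_pos ht _) (Real.exp_pos _)
  set g : Fin n → ℝ := fun i => pgrad φ x i with hg
  set S1 := ∑ i, ∑ j, A x t i j * g i * g j with hS1
  set S2 := ∑ i, ∑ j, A x t i j * phess φ x i j with hS2
  set S3 := ∑ i, b x t i * g i with hS3
  have hdx : DifferentiableAt ℝ φ x := (hφreg x hx).differentiableAt (by norm_num)
  -- time derivative
  have e0 : deriv (fun τ => τ ^ (-β) * Real.exp (-(φ x) / τ)) t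
      = c * E * (-β / t + φ x / t ^ 2) :=
    (hasDerivAt_time (φ x) β t ht).deriv
  -- hessian sum
  have e1 : (∑ i, ∑ j, A x t i j * phess (fun y => W y t) x i j)
      = c * E / t ^ 2 * S1 - c * E / t * S2 := by
    rw [hS1, hS2, Finset.mul_sum, Finset.mul_sum, ← Finset.sum_sub_distrib]
    refine Finset.sum_congr rfl fun i _ => ?_
    rw [Finset.mul_sum, Finset.mul_sum, ← Finset.sum_sub_distrib]
    refine Finset.sum_congr rfl fun j _ => ?_
    rw [hfun, phess_cexp U hU φ hφreg x hx c t ht.ne' i j]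
    simp only [hg]
    ring
  -- gradient sum
  have e2 : (∑ i, b x t i * pgrad (fun y => W y t) x i) = -(c * E / t) * S3 := by
    rw [hS3, Finset.mul_sum]
    refine Finset.sum_congr rfl fun i _ => ?_
    rw [hfun, pgrad_cexp φ x hdx c t i]
    simp only [hg]
    ring
  rw [e0, e1, e2]
  -- inequalities
  have hgrad : φ x ≤ S1 := by
    refine le_trans (hφgrad x hx) (le_trans (hell x hx t ht g) (le_of_eq ?_))
    refine Finset.sum_congr rfl fun i _ => Finset.sum_congr rfl fun j _ => by ring
  have hbig : S2 - S3 ≤ β := hβbig x hx t ht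
  have hfact : c * E * (-β / t + φ x / t ^ 2) - (c * E / t ^ 2 * S1 - c * E / t * S2)
      + -(c * E / t) * S3
      = (c * E / t) * (-β + (φ x - S1) / t + (S2 - S3)) := by
    field_simp
    ring
  rw [hfact]
  apply mul_nonpos_of_nonneg_of_nonpos (by positivity)
  have h1 : (φ x - S1) / t ≤ 0 :=
    div_nonpos_of_nonpos_of_nonneg (by linarith) ht.le
  linarith
end
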